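/- Chains of F embed into chains of the Koopman linear system of the same length: if the points z, F z, F^[2] z, …, F^[l] z are pairwise distinct, then the dual points ev_z, Φ (ev_z), Φ^[2] (ev_z), …, Φ^[l] (ev_z) are pairwise distinct elements of Module.Dual (ZMod 2) W. -/
import Mathlib


/-- The dual (Koopman) linear map `F* : V →ₗ V`, `φ ↦ φ ∘ F`, on the `ZMod 2`-vector space
`V` of all functions `(Fin n → ZMod 2) → ZMod 2`. -/
def dualMap (n : ℕ) (F : (Fin n → ZMod 2) → (Fin n → ZMod 2)) :
    ((Fin n → ZMod 2) → ZMod 2) →ₗ[ZMod 2] ((Fin n → ZMod 2) → ZMod 2) where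
  toFun φ := φ ∘ F
  map_add' _ _ := rfl
  map_smul' _ _ := rfl

/-- `W`, the smallest `F*`-invariant subspace of `V` containing all coordinate functions
`χ_i : x ↦ x i`: the span of `{(F*)^k χ_i : k ≥ 0, i : Fin n}`. -/
def Wspace (n : ℕ) (F : (Fin n → ZMod 2) → (Fin n → ZMod 2)) :
    Submodule (ZMod 2) ((Fin n → ZMod 2) → ZMod 2) :=
  Submodule.span (ZMod 2)
    {ψ | ∃ (k : ℕ) (i : Fin n), ψ = ((dualMap n F) ^ k) (fun x => x i)}

/-- The evaluation functional `ev_x : W →ₗ ZMod 2`, `w ↦ w x`. -/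
def ev (n : ℕ) (F : (Fin n → ZMod 2) → (Fin n → ZMod 2)) (x : Fin n → ZMod 2) :
    Module.Dual (ZMod 2) (Wspace n F) where
  toFun w := (w : (Fin n → ZMod 2) → ZMod 2) x
  map_add' _ _ := rfl
  map_smul' _ _ := rfl

/-- The Koopman linear system `Φ` on `Module.Dual (ZMod 2) W`: `φ ↦ φ ∘ₗ F₁`, where
`F₁` is the restriction of `F*` to `W`. -/
def Koop (n : ℕ) (F : (Fin n → ZMod 2) → (Fin n → ZMod 2))
    (hW : ∀ v ∈ Wspace n F, dualMap n F v ∈ Wspace n F) :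
    Module.Dual (ZMod 2) (Wspace n F) → Module.Dual (ZMod 2) (Wspace n F) :=
  fun φ => φ ∘ₗ (dualMap n F).restrict hW

/-- Chains of `F` embed into chains of the Koopman linear system of the
same length: if `z, F z, …, F^[l] z` are pairwise distinct, then
`ev_z, Φ (ev_z), …, Φ^[l] (ev_z)` are pairwise distinct in `Module.Dual (ZMod 2) W`. -/
theorem koopman_embedding_of_chain (n : ℕ) (hn : 0 < n)
    (F : (Fin n → ZMod 2) → (Fin n → ZMod 2))
    (hW : ∀ v ∈ Wspace n F, dualMap n F v ∈ Wspace n F)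
    (z : Fin n → ZMod 2) (l : ℕ)
    (hchain : ∀ a b : ℕ, a ≤ l → b ≤ l → F^[a] z = F^[b] z → a = b) :
    ∀ a b : ℕ, a ≤ l → b ≤ l →
      (Koop n F hW)^[a] (ev n F z) = (Koop n F hW)^[b] (ev n F z) → a = b := by
  have hiter : ∀ (k : ℕ) (x : Fin n → ZMod 2),
      (Koop n F hW)^[k] (ev n F x) = ev n F (F^[k] x) := by
    intro k
    induction k with
    | zero => intro x; rfl
    | succ k ih =>
      intro x
      rw [Function.iterate_succ_apply, Function.iterate_succ_apply]
      have : Koop n F hW (ev n F x) = ev n F (F x) := by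
        ext w; rfl
      rw [this, ih]
  intro a b ha hb hab
  apply hchain a b ha hb
  rw [hiter, hiter] at hab
  funext i
  have hmem : (fun x : Fin n → ZMod 2 => x i) ∈ Wspace n F :=
    Submodule.subset_span ⟨0, i, rfl⟩
  have := congrArg (fun φ : Module.Dual (ZMod 2) (Wspace n F) => φ ⟨_, hmem⟩) hab
  exact this
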